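/- arXiv:1911.13277 — 4 statements merged into one kernel-verified Lean document; each statement's English description precedes it below -/
import Mathlib

section
/- As M → 0⁺, if p_M > 1 is defined by p_M·ln p_M − (p_M − 1) = M, then (p_M − 1)/√(2M) → 1. -/
/-!
`F x = x log x - (x - 1)` is Mathlib's `InformationTheory.klFun`. For `x ≥ 1`,
`(x - 1)² / (x + 1) ≤ F x ≤ (x - 1)² / 2`: the upper bound integrates `log y ≤ y - 1` from `1`,
the lower one is `log (1 + u) ≥ 2u / (u + 2)`. With `u = p_M - 1` and `s = √(2M)`, the upper bound
gives `s ≤ u` and the lower bound gives `u² ≤ s² (u + 2) / 2`, hence `u ≤ s + s² / 2`. So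
`(p_M - 1) / √(2M)` is squeezed between `1` and `1 + √(2M) / 2`.
-/

open Real Filter Set

namespace InformationTheory

lemma klFun_le_sq_div_two {x : ℝ} (hx : 1 ≤ x) :
    klFun x ≤ (x - 1) ^ 2 / 2 := by
  have hmono : MonotoneOn (fun y => (y - 1) ^ 2 / 2 - klFun y) (Ici 1) := by
    refine monotoneOn_of_hasDerivWithinAt_nonneg (f' := fun y => (y - 1) - log y)
      (convex_Ici 1) ?_ (fun y hy => ?_) (fun y hy => ?_)
    · exact ((((continuous_id.sub continuous_const).pow 2).div_const 2).sub
        continuous_klFun).continuousOn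
    · rw [interior_Ici] at hy
      have hd : HasDerivAt (fun y => (y - 1) ^ 2 / 2 - klFun y) ((y - 1) - log y) y := by
        refine ((((hasDerivAt_id' y).sub_const 1).fun_pow 2).div_const 2).fun_sub
          (hasDerivAt_klFun (ne_of_gt (zero_lt_one.trans hy))) |>.congr_deriv ?_
        norm_num
      exact hd.hasDerivWithinAt
    · rw [interior_Ici] at hy
      exact sub_nonneg.2 (log_le_sub_one_of_pos (zero_lt_one.trans hy))
  simpa [klFun_one] using hmono self_mem_Ici hx hx

lemma sq_div_add_one_le_klFun {x : ℝ} (hx : 1 ≤ x) :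
    (x - 1) ^ 2 / (x + 1) ≤ klFun x := by
  have hlog := le_log_one_add_of_nonneg (sub_nonneg.2 hx)
  rw [add_sub_cancel, div_le_iff₀ (by linarith)] at hlog
  rw [klFun_apply, div_le_iff₀ (by linarith)]
  nlinarith

lemma sub_one_div_sqrt_two_mul_klFun_mem_Icc {x : ℝ} (hx : 1 < x) :
    (x - 1) / √(2 * klFun x) ∈ Icc 1 (1 + √(2 * klFun x) / 2) := by
  have hlower := sq_div_add_one_le_klFun hx.le
  have hu : 0 < x - 1 := by linarith
  have hF : 0 < klFun x := lt_of_lt_of_le (by positivity) hlower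
  set s := √(2 * klFun x)
  have hs : 0 < s := sqrt_pos.2 (by linarith)
  have hs_sq : s ^ 2 = 2 * klFun x := sq_sqrt (by linarith)
  have hs_le : s ≤ x - 1 :=
    sqrt_le_iff.2 ⟨by linarith, by linarith [klFun_le_sq_div_two hx.le]⟩
  have hsq_le : (x - 1) ^ 2 ≤ s ^ 2 * (x + 1) / 2 := by
    rw [div_le_iff₀ (by linarith)] at hlower
    rw [hs_sq]
    linarith
  constructor
  · rw [le_div_iff₀ hs]
    linarith
  · rw [div_le_iff₀ hs]
    nlinarith

end InformationTheory

open InformationTheory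

theorem pM_asymptotics_small_M (p : ℝ → ℝ)
    (hp : ∀ M : ℝ, 0 < M → 1 < p M ∧
      p M * Real.log (p M) - (p M - 1) = M) :
    Filter.Tendsto (fun M : ℝ => (p M - 1) / Real.sqrt (2 * M))
      (nhdsWithin 0 (Set.Ioi 0)) (nhds 1) := by
  have hbounds : ∀ᶠ M in nhdsWithin 0 (Ioi 0),
      (p M - 1) / √(2 * M) ∈ Icc 1 (1 + √(2 * M) / 2) := by
    filter_upwards [self_mem_nhdsWithin] with M hM
    have hF : klFun (p M) = M := by
      rw [klFun_apply]
      linarith [(hp M hM).2]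
    simpa only [hF] using sub_one_div_sqrt_two_mul_klFun_mem_Icc (hp M hM).1
  have hupper : Tendsto (fun M : ℝ => 1 + √(2 * M) / 2) (nhdsWithin 0 (Ioi 0)) (nhds 1) := by
    have hcont : Continuous fun M : ℝ => 1 + √(2 * M) / 2 := by fun_prop
    simpa using (hcont.tendsto 0).mono_left nhdsWithin_le_nhds
  exact tendsto_of_tendsto_of_tendsto_of_le_of_le' tendsto_const_nhds hupper
    (hbounds.mono fun _ h => h.1) (hbounds.mono fun _ h => h.2)
end

section
/- Define p_M = min(2, p') where p' > 1 solves p'·ln p' − (p'−1) = M, and q_M ∈ (0,1) solves ln(1/q_M) − (1−q_M) = M. Then the ratio E(p_M||q_M)/M tends to 4 as M → 0⁺ and tends to 2 as M → ∞, where E(p||q) = p·ln(p/q) − (p−q). -/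
/-!
Both limits come from the decomposition
`E(p‖q) = E(p‖1) + p·E(1‖q) + (p-1)(1-q)`,
in which `E(p'‖1) = E(1‖q_M) = M`. For large `M` we have `p_M = 2` and
`E(2‖q_M) = 2M + O(1)`. For small `M`, `p_M = p' → 1⁺` and `q_M → 1⁻`, so
`E(p'‖q_M) = (1 + p')M + (p'-1)(1-q_M)`; both `E(·‖1)` and `E(1‖·)` vanish to second order
at `1` with second derivative `1`, hence `(p'-1)² ~ 2M` and `(1-q_M)² ~ 2M`, and the cross
term contributes `2M`.
-/

noncomputable def E (p q : ℝ) : ℝ := p * Real.log (p / q) - (p - q)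

open Filter Set Topology

theorem E_one_right (p : ℝ) : E p 1 = p * Real.log p - (p - 1) := by
  simp only [E, div_one]

theorem E_one_left (q : ℝ) : E 1 q = -Real.log q - (1 - q) := by
  simp only [E, one_mul, one_div, Real.log_inv]

theorem E_eq_add {p q : ℝ} (hp : 0 < p) (hq : 0 < q) :
    E p q = E p 1 + p * E 1 q + (p - 1) * (1 - q) := by
  rw [E_one_right, E_one_left, E, Real.log_div hp.ne' hq.ne']
  ring

theorem hasDerivAt_E_one_right {x : ℝ} (hx : x ≠ 0) :
    HasDerivAt (fun p => E p 1) (Real.log x) x := by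
  simp only [E_one_right]
  exact (((hasDerivAt_id' x).mul (Real.hasDerivAt_log hx)).sub
    ((hasDerivAt_id' x).sub_const 1)).congr_deriv (by rw [mul_inv_cancel₀ hx]; ring)

theorem hasDerivAt_E_one_left {x : ℝ} (hx : x ≠ 0) :
    HasDerivAt (fun q => E 1 q) (1 - x⁻¹) x := by
  simp only [E_one_left]
  exact ((Real.hasDerivAt_log hx).neg.sub ((hasDerivAt_id' x).const_sub 1)).congr_deriv
    (by ring)

theorem strictMonoOn_E_one_right : StrictMonoOn (fun p => E p 1) (Ici 1) := by
  have hderiv : ∀ x ∈ Ici (1 : ℝ), HasDerivAt (fun p => E p 1) (Real.log x) x :=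
    fun x hx => hasDerivAt_E_one_right (by linarith [mem_Ici.1 hx])
  refine strictMonoOn_of_hasDerivWithinAt_pos (convex_Ici 1)
    (fun x hx => (hderiv x hx).continuousAt.continuousWithinAt)
    (fun x hx => (hderiv x (interior_subset hx)).hasDerivWithinAt) fun x hx => ?_
  rw [interior_Ici] at hx
  exact Real.log_pos hx

theorem strictAntiOn_E_one_left : StrictAntiOn (fun q => E 1 q) (Ioc 0 1) := by
  have hderiv : ∀ x ∈ Ioc (0 : ℝ) 1, HasDerivAt (fun q => E 1 q) (1 - x⁻¹) x :=
    fun x hx => hasDerivAt_E_one_left hx.1.ne'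
  refine strictAntiOn_of_hasDerivWithinAt_neg (convex_Ioc 0 1)
    (fun x hx => (hderiv x hx).continuousAt.continuousWithinAt)
    (fun x hx => (hderiv x (interior_subset hx)).hasDerivWithinAt) fun x hx => ?_
  rw [interior_Ioc] at hx
  linarith [(one_lt_inv₀ hx.1).2 hx.2]

theorem tendsto_div_sub_sq_of_hasDerivAt {f f' : ℝ → ℝ} {a c : ℝ}
    (hf : ∀ᶠ x in 𝓝 a, HasDerivAt f (f' x) x) (hf' : HasDerivAt f' c a)
    (hfa : f a = 0) (hf'a : f' a = 0) :
    Tendsto (fun x => f x / (x - a) ^ 2) (𝓝[≠] a) (𝓝 (c / 2)) := by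
  refine HasDerivAt.lhopital_zero_nhdsNE (g' := fun x => 2 * (x - a))
    (hf.filter_mono nhdsWithin_le_nhds) (Eventually.of_forall fun x => ?_) ?_ ?_ ?_ ?_
  · exact (((hasDerivAt_id' x).sub_const a).pow 2).congr_deriv (by norm_num)
  · filter_upwards [self_mem_nhdsWithin] with x hx
    exact mul_ne_zero two_ne_zero (sub_ne_zero.2 hx)
  · exact hfa ▸ hf.self_of_nhds.continuousAt.continuousWithinAt.tendsto
  · exact tendsto_nhdsWithin_of_tendsto_nhds
      ((by fun_prop : Continuous fun x : ℝ => (x - a) ^ 2).tendsto' a 0 (by simp))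
  · refine ((hasDerivAt_iff_tendsto_slope.1 hf').div_const 2).congr fun x => ?_
    rw [slope_def_field, hf'a, sub_zero, div_div, mul_comm]

theorem tendsto_E_one_right_div_sq :
    Tendsto (fun p => E p 1 / (p - 1) ^ 2) (𝓝[≠] 1) (𝓝 (1 / 2)) :=
  tendsto_div_sub_sq_of_hasDerivAt
    ((eventually_ne_nhds one_ne_zero).mono fun _ hx => hasDerivAt_E_one_right hx)
    (by simpa using Real.hasDerivAt_log one_ne_zero) (by simp [E]) Real.log_one

theorem tendsto_E_one_left_div_sq :
    Tendsto (fun q => E 1 q / (q - 1) ^ 2) (𝓝[≠] 1) (𝓝 (1 / 2)) :=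
  tendsto_div_sub_sq_of_hasDerivAt
    ((eventually_ne_nhds one_ne_zero).mono fun _ hx => hasDerivAt_E_one_left hx)
    (by simpa using (hasDerivAt_inv (one_ne_zero' ℝ)).const_sub 1) (by simp [E]) (by simp)

theorem tendsto_nhdsGT_of_strictMonoOn {f x : ℝ → ℝ} {a : ℝ} (hf : StrictMonoOn f (Ici a))
    (hfa : f a = 0) (hx : ∀ M, 0 < M → a < x M ∧ f (x M) = M) :
    Tendsto x (𝓝[>] 0) (𝓝[>] a) := by
  have hgt : ∀ᶠ M in 𝓝[>] 0, a < x M :=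
    eventually_nhdsWithin_of_forall fun M hM => (hx M hM).1
  refine tendsto_nhdsWithin_iff.2 ⟨tendsto_order.2 ⟨fun b hb => ?_, fun b hb => ?_⟩, hgt⟩
  · exact hgt.mono fun M hM => hb.trans hM
  · have hfb : 0 < f b := hfa ▸ hf self_mem_Ici hb.le hb
    filter_upwards [Ioo_mem_nhdsGT hfb] with M hM
    obtain ⟨hxa, hfx⟩ := hx M hM.1
    rw [← hf.lt_iff_lt hxa.le hb.le, hfx]
    exact hM.2

theorem tendsto_nhdsLT_of_strictAntiOn {f x : ℝ → ℝ} {a c : ℝ} (hf : StrictAntiOn f (Ioc c a))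
    (hfa : f a = 0) (hx : ∀ M, 0 < M → x M ∈ Ioo c a ∧ f (x M) = M) :
    Tendsto x (𝓝[>] 0) (𝓝[<] a) := by
  have hmem : ∀ᶠ M in 𝓝[>] 0, x M ∈ Ioo c a :=
    eventually_nhdsWithin_of_forall fun M hM => (hx M hM).1
  refine tendsto_nhdsWithin_iff.2
    ⟨tendsto_order.2 ⟨fun b hb => ?_, fun b hb => hmem.mono fun M hM => hM.2.trans hb⟩,
      hmem.mono fun M hM => hM.2⟩
  rcases le_or_gt b c with hbc | hcb
  · exact hmem.mono fun M hM => hbc.trans_lt hM.1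
  have hfb : 0 < f b := hfa ▸ hf ⟨hcb, hb.le⟩ ⟨hcb.trans hb, le_rfl⟩ hb
  filter_upwards [Ioo_mem_nhdsGT hfb] with M hM
  obtain ⟨hxca, hfx⟩ := hx M hM.1
  rw [← hf.lt_iff_gt ⟨hxca.1, hxca.2.le⟩ ⟨hcb, hb.le⟩, hfx]
  exact hM.2

theorem tendsto_sub_sq_div_of_eq {f x : ℝ → ℝ} {a c : ℝ} {l : Filter ℝ}
    (hf : Tendsto (fun y => f y / (y - a) ^ 2) (𝓝[≠] a) (𝓝 c)) (hc : c ≠ 0)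
    (hx : Tendsto x l (𝓝[≠] a)) (hfx : ∀ᶠ M in l, f (x M) = M) :
    Tendsto (fun M => (x M - a) ^ 2 / M) l (𝓝 c⁻¹) :=
  ((hf.comp hx).inv₀ hc).congr' <| hfx.mono fun M hM => by
    simp only [Function.comp_apply, inv_div, hM]

theorem tendsto_abs_mul_div_of_tendsto_sq_div {u v : ℝ → ℝ} {a b : ℝ} {l : Filter ℝ}
    (hu : Tendsto (fun M => u M ^ 2 / M) l (𝓝 a)) (hv : Tendsto (fun M => v M ^ 2 / M) l (𝓝 b))
    (hpos : ∀ᶠ M in l, 0 < M) :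
    Tendsto (fun M => |u M * v M| / M) l (𝓝 (Real.sqrt (a * b))) :=
  (hu.mul hv).sqrt.congr' <| hpos.mono fun M hM => by
    dsimp only
    rw [← Real.sqrt_sq (div_nonneg (abs_nonneg _) hM.le), div_pow, sq_abs]
    ring_nf

section

variable {p' q : ℝ → ℝ}

theorem tendsto_E_min_div_nhdsGT (hp : ∀ M, 0 < M → 1 < p' M ∧ E (p' M) 1 = M)
    (hq : ∀ M, 0 < M → q M ∈ Ioo 0 1 ∧ E 1 (q M) = M) :
    Tendsto (fun M => E (min 2 (p' M)) (q M) / M) (𝓝[>] 0) (𝓝 4) := by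
  have hp1 := tendsto_nhdsGT_of_strictMonoOn strictMonoOn_E_one_right (by simp [E]) hp
  have hq1 := tendsto_nhdsLT_of_strictAntiOn strictAntiOn_E_one_left (by simp [E]) hq
  have hpsq := tendsto_sub_sq_div_of_eq tendsto_E_one_right_div_sq (by norm_num)
    (hp1.mono_right (nhdsWithin_mono _ fun _ hx => (mem_Ioi.1 hx).ne'))
    (eventually_nhdsWithin_of_forall fun M hM => (hp M hM).2)
  have hqsq := tendsto_sub_sq_div_of_eq tendsto_E_one_left_div_sq (by norm_num)
    (hq1.mono_right (nhdsWithin_mono _ fun _ hx => (mem_Iio.1 hx).ne))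
    (eventually_nhdsWithin_of_forall fun M hM => (hq M hM).2)
  have hcross := tendsto_abs_mul_div_of_tendsto_sq_div hpsq hqsq self_mem_nhdsWithin
  have hsum := (tendsto_const_nhds (x := (1 : ℝ))).add
    ((hp1.mono_right nhdsWithin_le_nhds).add hcross)
  rw [show (1 : ℝ) + (1 + Real.sqrt ((1 / 2)⁻¹ * (1 / 2)⁻¹)) = 4 by
    rw [Real.sqrt_mul_self (by norm_num)]; norm_num] at hsum
  refine hsum.congr' ?_
  filter_upwards [self_mem_nhdsWithin,
    (hp1.mono_right nhdsWithin_le_nhds).eventually_lt_const one_lt_two] with M hM hp2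
  obtain ⟨hp1M, hpM⟩ := hp M hM
  obtain ⟨⟨hq0, hq1M⟩, hqM⟩ := hq M hM
  have hM0 : M ≠ 0 := (mem_Ioi.1 hM).ne'
  rw [min_eq_right hp2.le, E_eq_add (by linarith) hq0, hpM, hqM,
    abs_of_nonpos (mul_nonpos_of_nonneg_of_nonpos (by linarith) (by linarith))]
  field_simp
  ring

theorem tendsto_E_min_div_atTop (hp : ∀ M, 0 < M → 1 < p' M ∧ E (p' M) 1 = M)
    (hq : ∀ M, 0 < M → q M ∈ Ioo 0 1 ∧ E 1 (q M) = M) :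
    Tendsto (fun M => E (min 2 (p' M)) (q M) / M) atTop (𝓝 2) := by
  have hqdiv : Tendsto (fun M => q M / M) atTop (𝓝 0) := by
    refine squeeze_zero' ?_ ?_ ((tendsto_const_nhds (x := (1 : ℝ))).div_atTop tendsto_id)
    · filter_upwards [eventually_gt_atTop 0] with M hM
      exact div_nonneg (hq M hM).1.1.le hM.le
    · filter_upwards [eventually_gt_atTop 0] with M hM
      exact div_le_div_of_nonneg_right (hq M hM).1.2.le hM.le
  have hsum : Tendsto (fun M => 2 + (E 2 1 + 1) / M - q M / M) atTop (𝓝 (2 + 0 - 0)) :=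
    ((tendsto_const_nhds (x := (2 : ℝ))).add
      ((tendsto_const_nhds (x := E 2 1 + 1)).div_atTop tendsto_id)).sub hqdiv
  rw [add_zero, sub_zero] at hsum
  refine hsum.congr' ?_
  filter_upwards [eventually_gt_atTop 0, eventually_ge_atTop (E 2 1)] with M hM hM2
  obtain ⟨hp1M, hpM⟩ := hp M hM
  obtain ⟨⟨hq0, -⟩, hqM⟩ := hq M hM
  have h2p : 2 ≤ p' M := by
    rwa [← strictMonoOn_E_one_right.le_iff_le (by norm_num) hp1M.le, hpM]
  rw [min_eq_left h2p, E_eq_add two_pos hq0, hqM]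
  field_simp
  ring

end

theorem ratio_limits (p' q : ℝ → ℝ)
    (hp : ∀ M : ℝ, 0 < M → 1 < p' M ∧ p' M * Real.log (p' M) - (p' M - 1) = M)
    (hq : ∀ M : ℝ, 0 < M → q M ∈ Set.Ioo (0:ℝ) 1 ∧
      Real.log (1 / q M) - (1 - q M) = M) :
    Filter.Tendsto (fun M : ℝ => E (min 2 (p' M)) (q M) / M)
      (nhdsWithin 0 (Set.Ioi 0)) (nhds 4) ∧
    Filter.Tendsto (fun M : ℝ => E (min 2 (p' M)) (q M) / M)
      Filter.atTop (nhds 2) := by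
  have hpE : ∀ M, 0 < M → 1 < p' M ∧ E (p' M) 1 = M := by
    simpa only [E_one_right] using hp
  have hqE : ∀ M, 0 < M → q M ∈ Ioo 0 1 ∧ E 1 (q M) = M := by
    simpa only [E_one_left, one_div, Real.log_inv] using hq
  exact ⟨tendsto_E_min_div_nhdsGT hpE hqE, tendsto_E_min_div_atTop hpE hqE⟩
end

section
/- There exists a uniform constant C > 0 such that for every M > 0, E(p_M||q_M) ≤ C·M, where q_M ∈ (0,1) solves E(1||q_M) = M and p_M = min(2, p') with p' > 1 solving E(p'||1) = M. -/
lemma log_ge_one_sub_inv {y : ℝ} (hy : 0 < y) : 1 - 1 / y ≤ Real.log y := by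
  have h := Real.log_le_sub_one_of_pos (show (0:ℝ) < 1 / y by positivity)
  rw [one_div, Real.log_inv] at h
  rw [one_div]
  linarith

lemma E1_mono {a b : ℝ} (ha : 1 ≤ a) (hab : a ≤ b) :
    a * Real.log a - (a - 1) ≤ b * Real.log b - (b - 1) := by
  have ha0 : 0 < a := lt_of_lt_of_le one_pos ha
  have hb0 : 0 < b := lt_of_lt_of_le ha0 hab
  have h1 : 1 - 1 / (b / a) ≤ Real.log (b / a) := log_ge_one_sub_inv (by positivity)
  have h2 : Real.log (b / a) = Real.log b - Real.log a :=
    Real.log_div (ne_of_gt hb0) (ne_of_gt ha0)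
  have h3 : 1 / (b / a) = a / b := by field_simp
  have h4 : b * (a / b) = a := by field_simp
  have hloga : 0 ≤ Real.log a := Real.log_nonneg ha
  have h1' : 1 - a / b ≤ Real.log b - Real.log a := by
    rw [← h3, ← h2]; exact h1
  nlinarith [mul_le_mul_of_nonneg_left h1' hb0.le,
    mul_le_mul_of_nonneg_right hab hloga]

set_option maxHeartbeats 1000000 in
theorem uniform_relative_bound_lower :
    ∃ C : ℝ, 0 < C ∧ ∀ M : ℝ, 0 < M → ∀ p' qM : ℝ,
      1 < p' → p' * Real.log p' - (p' - 1) = M →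
      qM ∈ Set.Ioo (0:ℝ) 1 → Real.log (1 / qM) - (1 - qM) = M →
      E (min 2 p') qM ≤ C * M := by
  refine ⟨9, by norm_num, ?_⟩
  intro M hM p' q hp' hEp hq hEq
  set p := min 2 p' with hpdef
  have hp1 : 1 < p := lt_min one_lt_two hp'
  have hp2 : p ≤ 2 := min_le_left _ _
  have hpp' : p ≤ p' := min_le_right _ _
  have hp0 : 0 < p := lt_trans one_pos hp1
  have hq0 : 0 < q := hq.1
  have hq1 : q < 1 := hq.2
  -- E(p,1) ≤ M
  have hA : p * Real.log p - (p - 1) ≤ M := by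
    calc p * Real.log p - (p - 1) ≤ p' * Real.log p' - (p' - 1) := E1_mono hp1.le hpp'
      _ = M := hEp
  -- sqrt facts for p
  set a := Real.sqrt p with hadef
  have hsp : a * a = p := Real.mul_self_sqrt hp0.le
  have ha1 : 1 ≤ a := by
    rw [hadef]
    exact Real.one_le_sqrt.mpr hp1.le
  have ha0 : 0 < a := lt_of_lt_of_le one_pos ha1
  have hlogp : Real.log p = 2 * Real.log a := by
    rw [hadef, Real.log_sqrt hp0.le]; ring
  have hla : 1 - 1 / a ≤ Real.log a := log_ge_one_sub_inv ha0
  have hpa : p / a = a := by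
    rw [← hsp]; field_simp
  have hsq_p : (a - 1) ^ 2 ≤ M := by
    have h5 : p * (1 - 1 / a) ≤ p * Real.log a := mul_le_mul_of_nonneg_left hla hp0.le
    have h6 : p * (1 / a) = a := by
      rw [mul_one_div, hpa]
    nlinarith [hA, hlogp, hsp]
  have hap : a - 1 ≤ Real.sqrt M := by
    have h7 : Real.sqrt ((a - 1) ^ 2) ≤ Real.sqrt M := Real.sqrt_le_sqrt hsq_p
    rwa [Real.sqrt_sq (by linarith)] at h7
  -- sqrt facts for q
  set b := Real.sqrt q with hbdef
  have hsq : b * b = q := Real.mul_self_sqrt hq0.le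
  have hb0 : 0 < b := Real.sqrt_pos.mpr hq0
  have hb1 : b ≤ 1 := by
    rw [hbdef, show (1:ℝ) = Real.sqrt 1 by simp]
    exact Real.sqrt_le_sqrt hq1.le
  have hlogq : Real.log q = 2 * Real.log b := by
    rw [hbdef, Real.log_sqrt hq0.le]; ring
  have hlb : Real.log b ≤ b - 1 := Real.log_le_sub_one_of_pos hb0
  have hlog1q : Real.log (1 / q) = - Real.log q := by
    rw [one_div, Real.log_inv]
  have hsq_q : (1 - b) ^ 2 ≤ M := by
    nlinarith [hEq, hlog1q, hlogq, hsq]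
  have hbq : 1 - b ≤ Real.sqrt M := by
    have h8 : Real.sqrt ((1 - b) ^ 2) ≤ Real.sqrt M := Real.sqrt_le_sqrt hsq_q
    rwa [Real.sqrt_sq (by linarith)] at h8
  have hsM : Real.sqrt M * Real.sqrt M = M := Real.mul_self_sqrt hM.le
  have hsM0 : 0 ≤ Real.sqrt M := Real.sqrt_nonneg M
  -- a ≤ 2 since p ≤ 2 ≤ 4
  have ha2 : a ≤ 2 := by nlinarith [hsp]
  -- decomposition of E p q
  have hdec : E p q = (p * Real.log p - (p - 1)) + p * (Real.log (1 / q) - (1 - q))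
      + (p - 1) * (1 - q) := by
    unfold E
    rw [Real.log_div (ne_of_gt hp0) (ne_of_gt hq0), hlog1q]
    ring
  rw [hdec, hEq]
  -- (p-1)(1-q) = (a-1)(a+1)(1-b)(1+b) ≤ 3 √M · 2 √M = 6M
  have hkey : (p - 1) * (1 - q) ≤ 6 * M := by
    have e1 : p - 1 = (a - 1) * (a + 1) := by nlinarith [hsp]
    have e2 : 1 - q = (1 - b) * (1 + b) := by nlinarith [hsq]
    rw [e1, e2]
    have h9 : (a - 1) * (a + 1) ≤ Real.sqrt M * 3 := by
      nlinarith [hap, ha1, ha2, hsM0]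
    have h10 : (1 - b) * (1 + b) ≤ Real.sqrt M * 2 := by
      nlinarith [hbq, hb0, hb1, hsM0]
    have h12 : 0 ≤ (1 - b) * (1 + b) := by nlinarith
    have h14 : (0:ℝ) ≤ Real.sqrt M * 3 := by positivity
    have h13 := mul_le_mul h9 h10 h12 h14
    have h15 : Real.sqrt M * 3 * (Real.sqrt M * 2) = 6 * M := by
      calc Real.sqrt M * 3 * (Real.sqrt M * 2) = 6 * (Real.sqrt M * Real.sqrt M) := by ring
        _ = 6 * M := by rw [hsM]
    linarith [h13, h15]
  have hB : p * M ≤ 2 * M := mul_le_mul_of_nonneg_right hp2 hM.le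
  linarith [hA, hkey, hB]
end

section
/- There exists a uniform constant C > 0 such that for every M > 0, E(p_M||q_M) ≤ C·M, where q_M = min(2, q') with q' > 1 solving E(1||q') = M, and p_M is the infimum of p ≥ 0 with E(p||1) ≤ M. -/
/-- `E` extended by `E(0‖q) = q`. -/
noncomputable def Eext (p q : ℝ) : ℝ := if p = 0 then q else E p q

/-!
Writing `f p = E(p‖1)` and `g q = E(1‖q)`, one has the exact splitting
`E(p‖q) = f p + g q + (1 - p) log q`. Here `f p_M ≤ M` and, `g` being increasing on `[1, ∞)`,
`g q_M ≤ g q' = M`. Near the minimum both are quadratic: `(1 - p)² ≤ 2 f p` on `[0, 1]` and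
`(q - 1)² ≤ 2 q g q ≤ 4 g q` on `[1, 2]` (both from `t ≤ sinh t` at `t = ± log x`), so the cross
term `(1 - p) log q ≤ (1 - p)(q - 1)` is at most `3M` by AM-GM, and `E(p_M‖q_M) ≤ 5M`.
-/

open Real Set

theorem Real.log_le_half_sub_inv {x : ℝ} (hx : 1 ≤ x) : log x ≤ (x - x⁻¹) / 2 := by
  rw [← sinh_log (by linarith)]
  exact self_le_sinh_iff.mpr (log_nonneg hx)

theorem Real.half_sub_inv_le_log {x : ℝ} (hx₀ : 0 < x) (hx₁ : x ≤ 1) :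
    (x - x⁻¹) / 2 ≤ log x := by
  rw [← sinh_log hx₀]
  exact sinh_le_self_iff.mpr (log_nonpos hx₀.le hx₁)

theorem E_self_one (p : ℝ) : E p 1 = p * log p - (p - 1) := by
  rw [E, div_one]

theorem E_one_self (q : ℝ) : E 1 q = log (1 / q) - (1 - q) := by
  rw [E, one_mul]

theorem Eext_eq_E_add_E_add_mul_log {p q : ℝ} (hq : 0 < q) :
    Eext p q = E p 1 + E 1 q + (1 - p) * log q := by
  rw [E_self_one, E_one_self, one_div, log_inv, Eext]
  split_ifs with hp₀
  · simp only [hp₀]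
    ring
  · rw [E, log_div hp₀ hq.ne']
    ring

theorem E_one_monotoneOn : MonotoneOn (E 1) (Ici 1) := by
  intro a (ha : 1 ≤ a) b _ hab
  have ha₀ : 0 < a := by linarith
  have hlog : log b - log a ≤ b - a :=
    calc log b - log a = log (b / a) := (log_div (by linarith) ha₀.ne').symm
      _ ≤ b / a - 1 := log_le_sub_one_of_pos (div_pos (by linarith) ha₀)
      _ = (b - a) / a := by field_simp
      _ ≤ b - a := div_le_self (by linarith) ha
  simp only [E_one_self, one_div, log_inv]
  linarith

theorem sq_one_sub_le_two_mul_E_of_le_one {p : ℝ} (hp₀ : 0 ≤ p) (hp₁ : p ≤ 1) :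
    (1 - p) ^ 2 ≤ 2 * E p 1 := by
  rw [E_self_one]
  rcases hp₀.eq_or_lt with rfl | hp₀
  · norm_num
  · have h := mul_le_mul_of_nonneg_left (half_sub_inv_le_log hp₀ hp₁) hp₀.le
    have hinv : p * (p - p⁻¹) = p ^ 2 - 1 := by field_simp
    nlinarith

theorem sq_sub_one_le_two_mul_mul_E_of_one_le {q : ℝ} (hq : 1 ≤ q) :
    (q - 1) ^ 2 ≤ 2 * q * E 1 q := by
  have hq₀ : 0 < q := by linarith
  have h := mul_le_mul_of_nonneg_left (log_le_half_sub_inv hq) hq₀.le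
  have hinv : q * (q - q⁻¹) = q ^ 2 - 1 := by field_simp
  rw [E_one_self, one_div, log_inv]
  nlinarith

theorem sInf_sublevel_mem {M : ℝ} (hM : 0 ≤ M) :
    0 ≤ sInf {p : ℝ | 0 ≤ p ∧ p * log p - (p - 1) ≤ M} ∧
      sInf {p : ℝ | 0 ≤ p ∧ p * log p - (p - 1) ≤ M} ≤ 1 ∧
      E (sInf {p : ℝ | 0 ≤ p ∧ p * log p - (p - 1) ≤ M}) 1 ≤ M := by
  set S := {p : ℝ | 0 ≤ p ∧ p * log p - (p - 1) ≤ M}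
  have hone : (1 : ℝ) ∈ S := ⟨zero_le_one, by simpa using hM⟩
  have hbdd : BddBelow S := ⟨0, fun _ hp => hp.1⟩
  have hclosed : IsClosed S :=
    (isClosed_le continuous_const continuous_id).inter
      (isClosed_le (continuous_mul_log.sub (continuous_id.sub continuous_const))
        continuous_const)
  obtain ⟨hp₀, hpM⟩ := hclosed.csInf_mem ⟨1, hone⟩ hbdd
  exact ⟨hp₀, csInf_le hbdd hone, (E_self_one _).trans_le hpM⟩

theorem uniform_relative_bound_upper :
    ∃ C : ℝ, 0 < C ∧ ∀ M : ℝ, 0 < M → ∀ q' : ℝ,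
      1 < q' → Real.log (1 / q') - (1 - q') = M →
      Eext (sInf {p : ℝ | 0 ≤ p ∧ p * Real.log p - (p - 1) ≤ M}) (min 2 q')
        ≤ C * M := by
  refine ⟨5, by norm_num, fun M hM q' hq' hq'M => ?_⟩
  obtain ⟨hp₀, hp₁, hpM⟩ := sInf_sublevel_mem hM.le
  set p := sInf {p : ℝ | 0 ≤ p ∧ p * log p - (p - 1) ≤ M}
  set q := min 2 q'
  have hq₁ : 1 < q := lt_min one_lt_two hq'
  have hq₂ : q ≤ 2 := min_le_left _ _
  have hqM : E 1 q ≤ M :=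
    calc E 1 q ≤ E 1 q' := E_one_monotoneOn hq₁.le hq'.le (min_le_right _ _)
      _ = M := (E_one_self q').trans hq'M
  have hq₀ : 0 ≤ E 1 q := by simpa [E_one_self] using E_one_monotoneOn (mem_Ici.2 le_rfl) hq₁.le hq₁.le
  have hp_sq : (1 - p) ^ 2 ≤ 2 * M := by
    linarith [sq_one_sub_le_two_mul_E_of_le_one hp₀ hp₁]
  have hq_sq : (q - 1) ^ 2 ≤ 4 * M := by
    nlinarith [sq_sub_one_le_two_mul_mul_E_of_one_le hq₁.le]
  have hcross : (1 - p) * log q ≤ (1 - p) * (q - 1) :=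
    mul_le_mul_of_nonneg_left (log_le_sub_one_of_pos (by linarith)) (by linarith)
  rw [Eext_eq_E_add_E_add_mul_log (by linarith)]
  nlinarith [sq_nonneg (1 - p - (q - 1))]
end
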